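/- Let I = I(C_{2n+1}) be the edge ideal of the odd cycle C_{2n+1}. Then for every t ≥ 1, α(I^(t)) = 2t − ⌊t/(n+1)⌋. -/

import Mathlib

open MvPolynomial

noncomputable section

/-- The ideal generated by the variables indexed by `S`. -/
def varIdeal (K : Type*) [Field K] (N : ℕ) (S : Finset (Fin N)) :
    Ideal (MvPolynomial (Fin N) K) :=
  Ideal.span ((fun i => (X i : MvPolynomial (Fin N) K)) '' S)

/-- The edge ideal of a graph `G`, generated by `X i * X j` for edges `{i, j}`. -/
def edgeIdeal (K : Type*) [Field K] {N : ℕ} (G : SimpleGraph (Fin N)) :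
    Ideal (MvPolynomial (Fin N) K) :=
  Ideal.span {p | ∃ i j, G.Adj i j ∧ p = X i * X j}

/-- `S` is a vertex cover of `G`: every edge meets `S`. -/
def IsVertexCover {N : ℕ} (G : SimpleGraph (Fin N)) (S : Finset (Fin N)) : Prop :=
  ∀ ⦃i j : Fin N⦄, G.Adj i j → i ∈ S ∨ j ∈ S

/-- `S` is a minimal vertex cover of `G`. -/
def IsMinVertexCover {N : ℕ} (G : SimpleGraph (Fin N)) (S : Finset (Fin N)) : Prop :=
  IsVertexCover G S ∧ ∀ T ⊂ S, ¬ IsVertexCover G T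

/-- The `t`-th symbolic power of the edge ideal of `G`:
the intersection of the `t`-th powers of the minimal vertex cover primes. -/
def symbolicPower (K : Type*) [Field K] {N : ℕ} (G : SimpleGraph (Fin N)) (t : ℕ) :
    Ideal (MvPolynomial (Fin N) K) :=
  ⨅ (S : Finset (Fin N)) (_ : IsMinVertexCover G S), varIdeal K N S ^ t

/-- The cycle graph on `Fin m`, with edges `{i, i+1 mod m}`. -/
def cycleGraph (m : ℕ) : SimpleGraph (Fin m) :=
  SimpleGraph.fromRel (fun i j => (j : ℕ) = ((i : ℕ) + 1) % m)

/-- The set `L(t)` of monomials of degree at least `2t` whose weight with respect to every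
minimal vertex cover is at least `t`. -/
def Lset (K : Type*) [Field K] {N : ℕ} (G : SimpleGraph (Fin N)) (t : ℕ) :
    Set (MvPolynomial (Fin N) K) :=
  {p | ∃ a : Fin N →₀ ℕ, p = monomial a 1 ∧ 2 * t ≤ ∑ i, a i ∧
    ∀ S : Finset (Fin N), IsMinVertexCover G S → t ≤ ∑ i ∈ S, a i}

/-- The set `D(t)` of monomials of degree less than `2t` whose weight with respect to every
minimal vertex cover is at least `t`. -/
def Dset (K : Type*) [Field K] {N : ℕ} (G : SimpleGraph (Fin N)) (t : ℕ) :
    Set (MvPolynomial (Fin N) K) :=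
  {p | ∃ a : Fin N →₀ ℕ, p = monomial a 1 ∧ (∑ i, a i) < 2 * t ∧
    ∀ S : Finset (Fin N), IsMinVertexCover G S → t ≤ ∑ i ∈ S, a i}

/-- `α(J)`: the least total degree of a nonzero polynomial in `J`. -/
def alphaDeg {K : Type*} [Field K] {N : ℕ} (J : Ideal (MvPolynomial (Fin N) K)) : ℕ :=
  sInf {d | ∃ f ∈ J, f ≠ 0 ∧ f.totalDegree = d}

/-- The symbolic defect: the minimal number of generators one must add to `I(G)^t`
to obtain the symbolic power `I(G)^(t)`. -/
def sdefect (K : Type*) [Field K] {N : ℕ} (G : SimpleGraph (Fin N)) (t : ℕ) : ℕ :=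
  sInf {c | ∃ F : Finset (MvPolynomial (Fin N) K), F.card = c ∧
    symbolicPower K G t = edgeIdeal K G ^ t + Ideal.span (F : Set (MvPolynomial (Fin N) K))}

/-- The graph consisting of the odd cycle on vertices `0, …, 2n` (that is,
`x_1, …, x_{2n+1}`) together with one extra vertex `2n+1` (that is, `x_{2n+2}`)
joined to vertex `0` (that is, `x_1`) by an edge. -/
def appendedCycle (n : ℕ) : SimpleGraph (Fin (2 * n + 2)) :=
  SimpleGraph.fromRel (fun i j =>
    ((j : ℕ) = (i : ℕ) + 1 ∧ (j : ℕ) ≤ 2 * n) ∨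
    ((i : ℕ) = 2 * n ∧ (j : ℕ) = 0) ∨
    ((i : ℕ) = 0 ∧ (j : ℕ) = 2 * n + 1))

/-!
Write `t = (n+1)q + r` with `r ≤ n`. Every vertex cover of `C_{2n+1}` has at least `n+1`
vertices and meets the edge `{x_1, x_2}`, so `∏ x_i^q · (x_1 x_2)^r`, of degree
`(2n+1)q + 2r = 2t - q`, lies in every `P_{V'}^t`. Conversely, `P_{V'}^t ⊆ P_S^t` for every
vertex cover `S ⊇ V'`, so each monomial `x^b` of an element of `I^(t)` has degree at least `t`
in the variables of every vertex cover, in particular of the `2n+1` rotations of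
`{x_1, x_3, …, x_{2n+1}}`. Every vertex lies in `n+1` of them, so summing gives
`(2n+1)t ≤ (n+1) deg x^b`, i.e. `deg x^b ≥ 2t - ⌊t/(n+1)⌋`.
-/

section VertexCovers

variable {N : ℕ} {G : SimpleGraph (Fin N)}

lemma IsVertexCover.exists_isMinVertexCover_subset {S : Finset (Fin N)}
    (hS : IsVertexCover G S) : ∃ T ⊆ S, IsMinVertexCover G T := by
  obtain ⟨T, hTS, hT⟩ := exists_minimal_le_of_wellFoundedLT (IsVertexCover G) S hS
  exact ⟨T, hTS, hT.prop, fun T' hT' hcov => hT.not_prop_of_lt hT' hcov⟩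

end VertexCovers

section MonomialIdeals

variable (K : Type*) [Field K] {N : ℕ}

lemma varIdeal_mono {S T : Finset (Fin N)} (h : S ⊆ T) : varIdeal K N S ≤ varIdeal K N T :=
  Ideal.span_mono (Set.image_mono (Finset.coe_subset.2 h))

lemma symbolicPower_le_varIdeal_pow {G : SimpleGraph (Fin N)} {S : Finset (Fin N)}
    (hS : IsVertexCover G S) (t : ℕ) : symbolicPower K G t ≤ varIdeal K N S ^ t := by
  obtain ⟨T, hTS, hT⟩ := hS.exists_isMinVertexCover_subset
  exact (iInf₂_le T hT).trans (Ideal.pow_right_mono (varIdeal_mono K hTS) t)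

def weightIdeal (S : Finset (Fin N)) (t : ℕ) : Ideal (MvPolynomial (Fin N) K) where
  carrier := {f | ∀ a ∈ f.support, t ≤ ∑ i ∈ S, a i}
  zero_mem' := by simp
  add_mem' {f g} hf hg a ha := by
    rcases Finset.mem_union.1 (support_add ha) with h | h
    exacts [hf a h, hg a h]
  smul_mem' c f hf a ha := by
    obtain ⟨b, -, d, hd, rfl⟩ := Finset.mem_add.1 (support_mul c f ha)
    simpa only [Finsupp.add_apply, Finset.sum_add_distrib] using le_add_left (hf d hd)

lemma weightIdeal_mul_le (S : Finset (Fin N)) (s t : ℕ) :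
    weightIdeal K S s * weightIdeal K S t ≤ weightIdeal K S (s + t) := by
  refine Ideal.mul_le.2 fun f hf g hg a ha => ?_
  obtain ⟨b, hb, d, hd, rfl⟩ := Finset.mem_add.1 (support_mul f g ha)
  simpa only [Finsupp.add_apply, Finset.sum_add_distrib] using add_le_add (hf b hb) (hg d hd)

lemma varIdeal_le_weightIdeal (S : Finset (Fin N)) : varIdeal K N S ≤ weightIdeal K S 1 := by
  refine Ideal.span_le.2 ?_
  rintro _ ⟨i, hi, rfl⟩ a ha
  rw [support_X, Finset.mem_singleton] at ha
  simp [ha, Finsupp.single_apply, Finset.mem_coe.1 hi]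

lemma varIdeal_pow_le_weightIdeal (S : Finset (Fin N)) (t : ℕ) :
    varIdeal K N S ^ t ≤ weightIdeal K S t := by
  induction t with
  | zero => intro f _ a _; exact Nat.zero_le _
  | succ t ih =>
    rw [pow_succ]
    exact (Ideal.mul_mono ih (varIdeal_le_weightIdeal K S)).trans (weightIdeal_mul_le K S t 1)

lemma le_sum_of_mem_symbolicPower {G : SimpleGraph (Fin N)} {t : ℕ} {f : MvPolynomial (Fin N) K}
    (hf : f ∈ symbolicPower K G t) {a : Fin N →₀ ℕ} (ha : a ∈ f.support)
    {S : Finset (Fin N)} (hS : IsVertexCover G S) : t ≤ ∑ i ∈ S, a i :=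
  varIdeal_pow_le_weightIdeal K S t (symbolicPower_le_varIdeal_pow K hS t hf) a ha

lemma monomial_mem_varIdeal_pow {S : Finset (Fin N)} {t : ℕ} {a : Fin N →₀ ℕ}
    (h : t ≤ ∑ i ∈ S, a i) : monomial a (1 : K) ∈ varIdeal K N S ^ t := by
  classical
  have hX : ∀ i ∈ S, X i ^ a i ∈ varIdeal K N S ^ a i := fun i hi =>
    Ideal.pow_mem_pow (Ideal.subset_span (Set.mem_image_of_mem _ hi)) _
  have hS : ∏ i ∈ S, X i ^ a i ∈ varIdeal K N S ^ t := by
    refine Ideal.pow_le_pow_right h ?_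
    rw [← Finset.prod_pow_eq_pow_sum]
    exact Ideal.prod_mem_prod hX
  rw [monomial_eq, C_1, one_mul, Finsupp.prod_fintype _ _ (fun _ => pow_zero _),
    ← Finset.prod_mul_prod_compl S]
  exact Ideal.mul_mem_right _ _ hS

lemma monomial_mem_symbolicPower {G : SimpleGraph (Fin N)} {t : ℕ} {a : Fin N →₀ ℕ}
    (h : ∀ S, IsVertexCover G S → t ≤ ∑ i ∈ S, a i) :
    monomial a (1 : K) ∈ symbolicPower K G t :=
  Submodule.mem_iInf _ |>.2 fun S => Submodule.mem_iInf _ |>.2 fun hS =>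
    monomial_mem_varIdeal_pow K (h S hS.1)

lemma totalDegree_monomial_one (a : Fin N →₀ ℕ) :
    (monomial a (1 : K)).totalDegree = ∑ i, a i := by
  rw [totalDegree_monomial a one_ne_zero, Finsupp.sum_fintype a (fun _ e => e) fun _ => rfl]

lemma sum_le_totalDegree {f : MvPolynomial (Fin N) K} {a : Fin N →₀ ℕ} (ha : a ∈ f.support) :
    ∑ i, a i ≤ f.totalDegree :=
  Finsupp.sum_fintype a (fun _ e => e) (fun _ => rfl) ▸ le_totalDegree ha

lemma alphaDeg_eq {J : Ideal (MvPolynomial (Fin N) K)} {f : MvPolynomial (Fin N) K}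
    (hf : f ∈ J) (hf0 : f ≠ 0) (hle : ∀ g ∈ J, g ≠ 0 → f.totalDegree ≤ g.totalDegree) :
    alphaDeg J = f.totalDegree :=
  IsLeast.csInf_eq ⟨⟨f, hf, hf0, rfl⟩, by rintro _ ⟨g, hg, hg0, rfl⟩; exact hle g hg hg0⟩

end MonomialIdeals

section Cycle

variable {m : ℕ} [NeZero m]

lemma Fin.val_add_one_eq_mod (i : Fin m) : ((i + 1 : Fin m) : ℕ) = ((i : ℕ) + 1) % m := by
  rw [Fin.val_add, Fin.val_one', Nat.add_mod_mod]

lemma cycleGraph_adj_add_one (hm : 1 < m) (i : Fin m) : (cycleGraph m).Adj i (i + 1) := by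
  refine SimpleGraph.fromRel_adj _ _ _ |>.2 ⟨fun h => ?_, .inl (Fin.val_add_one_eq_mod i)⟩
  have := congrArg Fin.val h
  rw [Fin.val_add_one_eq_mod] at this
  rcases Nat.lt_or_ge ((i : ℕ) + 1) m with h1 | h1
  · rw [Nat.mod_eq_of_lt h1] at this; omega
  · rw [show (i : ℕ) + 1 = m by omega, Nat.mod_self] at this; omega

lemma cycleGraph_adj_cases {i j : Fin m} (h : (cycleGraph m).Adj i j) : j = i + 1 ∨ i = j + 1 := by
  obtain ⟨-, h | h⟩ := SimpleGraph.fromRel_adj _ _ _ |>.1 h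
  · exact .inl (Fin.ext (h.trans (Fin.val_add_one_eq_mod i).symm))
  · exact .inr (Fin.ext (h.trans (Fin.val_add_one_eq_mod j).symm))

lemma IsVertexCover.le_two_mul_card_of_cycleGraph (hm : 1 < m) {S : Finset (Fin m)}
    (hS : IsVertexCover (cycleGraph m) S) : m ≤ 2 * S.card := by
  classical
  have hdisj : Disjoint Sᶜ (Sᶜ.map (addRightEmbedding 1)) := by
    refine Finset.disjoint_left.2 fun x hx hx' => ?_
    obtain ⟨y, hy, rfl⟩ := Finset.mem_map.1 hx'
    rcases hS (cycleGraph_adj_add_one hm y) with h | h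
    exacts [Finset.mem_compl.1 hy h, Finset.mem_compl.1 hx h]
  have := Finset.card_le_univ (Sᶜ ∪ Sᶜ.map (addRightEmbedding 1))
  rw [Finset.card_union_of_disjoint hdisj, Finset.card_map, Finset.card_compl,
    Fintype.card_fin] at this
  omega

end Cycle

section OddCycle

open Fin.NatCast

variable {n : ℕ}

def rotatedCover (n : ℕ) (s : Fin (2 * n + 1)) : Finset (Fin (2 * n + 1)) :=
  (Finset.range (n + 1)).image fun k => s + ((2 * k : ℕ) : Fin (2 * n + 1))

lemma add_natCast_mem_rotatedCover (s : Fin (2 * n + 1)) {d : ℕ} (hd : d ≤ 2 * n)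
    (heven : Even d) : s + (d : Fin (2 * n + 1)) ∈ rotatedCover n s := by
  obtain ⟨k, rfl⟩ := heven
  exact Finset.mem_image.2 ⟨k, Finset.mem_range.2 (by omega), by congr 2; omega⟩

lemma rotatedCover_isVertexCover (s : Fin (2 * n + 1)) :
    IsVertexCover (cycleGraph (2 * n + 1)) (rotatedCover n s) := by
  suffices h : ∀ i, i ∈ rotatedCover n s ∨ i + 1 ∈ rotatedCover n s by
    intro i j hij
    rcases cycleGraph_adj_cases hij with rfl | rfl
    exacts [h i, (h j).symm]
  intro i
  set d := ((i - s : Fin (2 * n + 1)) : ℕ)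
  have hi : i = s + (d : Fin (2 * n + 1)) := by rw [Fin.cast_val_eq_self]; abel
  have hd : d < 2 * n + 1 := Fin.isLt _
  rcases Nat.even_or_odd d with heven | hodd
  · exact .inl (hi ▸ add_natCast_mem_rotatedCover s (by omega) heven)
  · refine .inr ?_
    rw [hi, add_assoc, ← Nat.cast_succ]
    exact add_natCast_mem_rotatedCover s (by obtain ⟨k, hk⟩ := hodd; omega) hodd.add_one

lemma sum_rotatedCover (a : Fin (2 * n + 1) → ℕ) (s : Fin (2 * n + 1)) :
    ∑ i ∈ rotatedCover n s, a i = ∑ k ∈ Finset.range (n + 1), a (s + ((2 * k : ℕ) : Fin _)) := by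
  refine Finset.sum_image fun k hk l hl hkl => ?_
  have := congrArg Fin.val (add_left_cancel hkl)
  rw [Fin.val_natCast, Fin.val_natCast, Nat.mod_eq_of_lt, Nat.mod_eq_of_lt] at this
  all_goals simp only [Finset.coe_range, Set.mem_Iio] at hk hl; omega

lemma sum_sum_rotatedCover (a : Fin (2 * n + 1) → ℕ) :
    ∑ s, ∑ i ∈ rotatedCover n s, a i = (n + 1) * ∑ i, a i := by
  calc ∑ s, ∑ i ∈ rotatedCover n s, a i
        = ∑ k ∈ Finset.range (n + 1), ∑ s, a (s + ((2 * k : ℕ) : Fin _)) := by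
          rw [Finset.sum_congr rfl fun s _ => sum_rotatedCover a s, Finset.sum_comm]
    _ = ∑ _k ∈ Finset.range (n + 1), ∑ i, a i :=
          Finset.sum_congr rfl fun k _ =>
            Fintype.sum_equiv (Equiv.addRight ((2 * k : ℕ) : Fin _)) _ _ fun _ => rfl
    _ = (n + 1) * ∑ i, a i := by simp

lemma mul_le_mul_sum_of_forall_isVertexCover {t : ℕ} {a : Fin (2 * n + 1) → ℕ}
    (h : ∀ S, IsVertexCover (cycleGraph (2 * n + 1)) S → t ≤ ∑ i ∈ S, a i) :
    (2 * n + 1) * t ≤ (n + 1) * ∑ i, a i :=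
  calc (2 * n + 1) * t = ∑ _s : Fin (2 * n + 1), t := by simp
    _ ≤ ∑ s, ∑ i ∈ rotatedCover n s, a i :=
      Finset.sum_le_sum fun s _ => h _ (rotatedCover_isVertexCover s)
    _ = (n + 1) * ∑ i, a i := sum_sum_rotatedCover a

end OddCycle

def edgeBoostedExponent {N : ℕ} (q r : ℕ) (u v : Fin N) : Fin N →₀ ℕ :=
  Finsupp.equivFunOnFinite.symm fun i => q + (if i = u then r else 0) + (if i = v then r else 0)

lemma sum_edgeBoostedExponent {N : ℕ} (q r : ℕ) (u v : Fin N) (S : Finset (Fin N)) :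
    ∑ i ∈ S, edgeBoostedExponent q r u v i
      = S.card * q + (if u ∈ S then r else 0) + (if v ∈ S then r else 0) := by
  simp [edgeBoostedExponent, Finset.sum_add_distrib, Finset.sum_ite_eq']

lemma IsVertexCover.le_sum_edgeBoostedExponent {n : ℕ} (hn : 1 ≤ n) (q r : ℕ)
    {S : Finset (Fin (2 * n + 1))} (hS : IsVertexCover (cycleGraph (2 * n + 1)) S) :
    (n + 1) * q + r ≤ ∑ i ∈ S, edgeBoostedExponent q r 0 1 i := by
  have hcard := hS.le_two_mul_card_of_cycleGraph (by omega)
  have hedge : 0 ∈ S ∨ 1 ∈ S :=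
    zero_add (1 : Fin (2 * n + 1)) ▸ hS (cycleGraph_adj_add_one (by omega) 0)
  have hr : r ≤ (if 0 ∈ S then r else 0) + (if 1 ∈ S then r else 0) := by
    rcases hedge with h | h <;> simp [h]
  have hq : (n + 1) * q ≤ S.card * q := Nat.mul_le_mul_right q (by omega)
  rw [sum_edgeBoostedExponent]
  omega

lemma two_mul_sub_div_le {n t d : ℕ} (h : (2 * n + 1) * t ≤ (n + 1) * d) :
    2 * t - t / (n + 1) ≤ d := by
  have h2t : 2 * t * (n + 1) = (2 * n + 1) * t + t := by ring
  have : (2 * t - d) * (n + 1) ≤ t := by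
    rw [Nat.sub_mul, h2t, mul_comm d]
    omega
  have := (Nat.le_div_iff_mul_le (by omega : 0 < n + 1)).2 this
  omega

theorem alpha_symbolicPower_general (K : Type*) [Field K] (n t : ℕ)
    (hn : 1 ≤ n) :
    alphaDeg (symbolicPower K (cycleGraph (2 * n + 1)) t)
      = 2 * t - t / (n + 1) := by
  set q := t / (n + 1)
  set r := t % (n + 1)
  have htqr : (n + 1) * q + r = t := Nat.div_add_mod t (n + 1)
  set a := edgeBoostedExponent q r (0 : Fin (2 * n + 1)) 1
  have hdeg : (monomial a (1 : K)).totalDegree = 2 * t - q := by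
    rw [totalDegree_monomial_one, sum_edgeBoostedExponent]
    simp only [Finset.card_univ, Fintype.card_fin, Finset.mem_univ, if_true]
    have : (2 * n + 1) * q + q = 2 * ((n + 1) * q) := by ring
    omega
  rw [← hdeg]
  refine alphaDeg_eq K ?_ (monomial_eq_zero.not.2 one_ne_zero) fun g hg hg0 => ?_
  · exact monomial_mem_symbolicPower K fun S hS => htqr ▸ hS.le_sum_edgeBoostedExponent hn q r
  · obtain ⟨b, hb⟩ := support_nonempty.2 hg0
    exact hdeg ▸ two_mul_sub_div_le ((mul_le_mul_sum_of_forall_isVertexCover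
      fun S hS => le_sum_of_mem_symbolicPower K hg hb hS).trans
      (Nat.mul_le_mul_left _ (sum_le_totalDegree K hb)))

/-- For the edge ideal of the odd cycle `C_{2n+1}`,
`α(I^(t)) = 2t - ⌊t/(n+1)⌋`. -/
theorem alpha_symbolicPower (K : Type*) [Field K] (n t : ℕ)
    (hn : 1 ≤ n) (ht : 1 ≤ t) :
    alphaDeg (symbolicPower K (cycleGraph (2 * n + 1)) t)
      = 2 * t - t / (n + 1) :=
  alpha_symbolicPower_general K n t hn
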